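/- Let a, b, c, x be real numbers with c > a > 0 and 0 ≤ x < 1. Then ∫₀¹ t^{a−1} (1−t)^{c−a−1} (1−xt)^{−b} dt = B(a, c−a) · ₂F₁(a, b; c; x), where B(a, c−a) = Γ(a)Γ(c−a)/Γ(c). -/

import Mathlib

open scoped BigOperators

/-- The Pochhammer symbol `(a)ₙ = a (a+1) ⋯ (a+n-1)`. -/
noncomputable def poch (a : ℝ) (n : ℕ) : ℝ := ∏ i ∈ Finset.range n, (a + i)

/-- The Gauss hypergeometric series `₂F₁(a, b; c; x)`. -/
noncomputable def F21 (a b c x : ℝ) : ℝ :=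
  ∑' n : ℕ, poch a n * poch b n / (poch c n * (Nat.factorial n : ℝ)) * x ^ n

/-!
Expand `(1 - x t)^(-b) = ∑ (b)ₙ / n! · (x t)ⁿ` by the binomial series. For `t ∈ (0, 1]` the
`n`-th term is dominated by `|(b)ₙ / n!| xⁿ t^(a-1) (1-t)^(c-a-1)`, which is summable and
integrable, so the series may be integrated term by term. The `n`-th integral is the Beta value
`B(a + n, c - a) = (a)ₙ / (c)ₙ · B(a, c - a)`, which produces the `n`-th term of `₂F₁(a, b; c; x)`.
-/

open Filter MeasureTheory Set ProbabilityTheory Interval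
open scoped Nat

lemma poch_succ (a : ℝ) (n : ℕ) : poch a (n + 1) = poch a n * (a + n) :=
  Finset.prod_range_succ _ _

lemma poch_eq_ascPochhammer_eval (a : ℝ) (n : ℕ) : poch a n = (ascPochhammer ℝ n).eval a := by
  induction n with
  | zero => simp [poch]
  | succ n ih => rw [poch_succ, ascPochhammer_succ_eval, ih]

lemma poch_pos {a : ℝ} (ha : 0 < a) (n : ℕ) : 0 < poch a n := by
  rw [poch_eq_ascPochhammer_eval]
  exact ascPochhammer_pos n a ha

lemma choose_add_sub_one_eq_poch_div_factorial (b : ℝ) (n : ℕ) :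
    Ring.choose (b + n - 1) n = poch b n / n ! := by
  rw [Ring.choose_eq_smul, Polynomial.descPochhammer_smeval_eq_ascPochhammer,
    Polynomial.ascPochhammer_smeval_eq_eval, poch_eq_ascPochhammer_eval, smul_eq_mul,
    inv_mul_eq_div]
  ring_nf

lemma hasSum_poch_div_factorial_mul_pow (b : ℝ) {u : ℝ} (hu : |u| < 1) :
    HasSum (fun n ↦ poch b n / n ! * u ^ n) ((1 - u) ^ (-b)) := by
  have := (Real.one_div_one_sub_rpow_hasFPowerSeriesOnBall_zero b).hasSum
    (y := u) (by simpa [enorm_eq_nnnorm, ← NNReal.coe_lt_one] using hu)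
  simp only [FormalMultilinearSeries.ofScalars_apply_eq, smul_eq_mul, zero_add,
    choose_add_sub_one_eq_poch_div_factorial] at this
  rwa [Real.rpow_neg (by linarith [le_abs_self u]), inv_eq_one_div]

lemma summable_abs_poch_div_factorial_mul_pow (b : ℝ) {u : ℝ} (hu : |u| < 1) :
    Summable (fun n ↦ |poch b n / n ! * u ^ n|) := by
  have hball := Real.one_div_one_sub_rpow_hasFPowerSeriesOnBall_zero b
  have := FormalMultilinearSeries.summable_norm_apply _ (Metric.eball_subset_eball hball.r_le
    (by simpa [enorm_eq_nnnorm, ← NNReal.coe_lt_one] using hu))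
  simpa only [FormalMultilinearSeries.ofScalars_apply_eq, smul_eq_mul, Real.norm_eq_abs,
    choose_add_sub_one_eq_poch_div_factorial] using this

lemma Gamma_add_nat_eq_poch_mul_Gamma {a : ℝ} (ha : ∀ k : ℕ, a ≠ -k) (n : ℕ) :
    Real.Gamma (a + n) = poch a n * Real.Gamma a := by
  induction n with
  | zero => simp [poch]
  | succ n ih =>
    have han : a + n ≠ 0 := fun h ↦ ha n (eq_neg_of_add_eq_zero_left h)
    rw [Nat.cast_succ, ← add_assoc, Real.Gamma_add_one han, ih, poch_succ]
    ring

lemma beta_add_nat {a q : ℝ} (ha : 0 < a) (hq : 0 < q) (n : ℕ) :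
    beta (a + n) q = poch a n / poch (a + q) n * beta a q := by
  have hne : ∀ s : ℝ, 0 < s → ∀ k : ℕ, s ≠ -k := fun s hs k h ↦ by
    linarith [k.cast_nonneg (α := ℝ)]
  have haq : 0 < a + q := add_pos ha hq
  have := (poch_pos haq n).ne'
  rw [beta, beta, add_right_comm, Gamma_add_nat_eq_poch_mul_Gamma (hne a ha),
    Gamma_add_nat_eq_poch_mul_Gamma (hne _ haq)]
  field_simp

lemma ofReal_rpow_mul_one_sub_rpow (p q : ℝ) {t : ℝ} (ht : t ∈ Icc (0 : ℝ) 1) :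
    ((t ^ (p - 1) * (1 - t) ^ (q - 1) : ℝ) : ℂ) =
      (t : ℂ) ^ ((p : ℂ) - 1) * (1 - t) ^ ((q : ℂ) - 1) := by
  rw [Complex.ofReal_mul, Complex.ofReal_cpow ht.1, Complex.ofReal_cpow (sub_nonneg.2 ht.2)]
  push_cast
  rfl

lemma betaIntegral_ofReal (p q : ℝ) :
    Complex.betaIntegral p q = ↑(∫ t in (0 : ℝ)..1, t ^ (p - 1) * (1 - t) ^ (q - 1)) := by
  rw [Complex.betaIntegral, ← intervalIntegral.integral_ofReal]
  refine intervalIntegral.integral_congr fun t ht ↦ ?_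
  rw [uIcc_of_le zero_le_one] at ht
  exact (ofReal_rpow_mul_one_sub_rpow p q ht).symm

lemma intervalIntegrable_rpow_mul_one_sub_rpow {p q : ℝ} (hp : 0 < p) (hq : 0 < q) :
    IntervalIntegrable (fun t : ℝ ↦ t ^ (p - 1) * (1 - t) ^ (q - 1)) volume 0 1 := by
  have hC := (Complex.betaIntegral_convergent (u := p) (v := q) (by simpa) (by simpa)).congr
    fun t ht ↦ (ofReal_rpow_mul_one_sub_rpow p q
      (Ioc_subset_Icc_self (by rwa [uIoc_of_le zero_le_one] at ht))).symm
  rw [intervalIntegrable_iff] at hC ⊢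
  simpa [IntegrableOn] using hC.re

lemma integral_rpow_mul_one_sub_rpow {p q : ℝ} (hp : 0 < p) (hq : 0 < q) :
    ∫ t in (0 : ℝ)..1, t ^ (p - 1) * (1 - t) ^ (q - 1) = beta p q := by
  rw [beta_eq_betaIntegralReal p q hp hq, betaIntegral_ofReal, Complex.ofReal_re]

lemma integral_rpow_mul_one_sub_rpow_mul_pow {p q : ℝ} (hp : 0 < p) (hq : 0 < q) (n : ℕ) :
    ∫ t in (0 : ℝ)..1, t ^ (p - 1) * (1 - t) ^ (q - 1) * t ^ n = beta (p + n) q := by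
  rw [← integral_rpow_mul_one_sub_rpow (by positivity) hq]
  refine intervalIntegral.integral_congr_ae (Eventually.of_forall fun t ht ↦ ?_)
  rw [uIoc_of_le zero_le_one] at ht
  rw [add_sub_right_comm, Real.rpow_add_natCast ht.1.ne']
  ring

lemma hasSum_intervalIntegral_mul_tsum {w f : ℝ → ℝ} {c : ℕ → ℝ} {x : ℝ}
    (hw : IntervalIntegrable w volume 0 1) (hc : Summable fun n ↦ ‖c n * x ^ n‖)
    (hf : ∀ t ∈ Ioc (0 : ℝ) 1, HasSum (fun n ↦ c n * (x * t) ^ n) (f t)) :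
    HasSum (fun n ↦ ∫ t in (0 : ℝ)..1, w t * (c n * (x * t) ^ n))
      (∫ t in (0 : ℝ)..1, w t * f t) := by
  have hΙ : Ι (0 : ℝ) 1 = Ioc 0 1 := uIoc_of_le zero_le_one
  refine intervalIntegral.hasSum_integral_of_dominated_convergence
    (fun n t ↦ ‖w t‖ * ‖c n * x ^ n‖) (fun n ↦ ?_) (fun n ↦ ?_)
    (Eventually.of_forall fun t _ ↦ hc.mul_left _) ?_
    (Eventually.of_forall fun t ht ↦ (hf t (hΙ ▸ ht)).mul_left (w t))
  · exact hw.def'.aestronglyMeasurable.mul (by fun_prop : Continuous _).aestronglyMeasurable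
  · refine Eventually.of_forall fun t ht ↦ ?_
    rw [hΙ] at ht
    have ht1 : ‖t ^ n‖ ≤ 1 := by
      rw [norm_pow, Real.norm_of_nonneg ht.1.le]
      exact pow_le_one₀ ht.1.le ht.2
    calc ‖w t * (c n * (x * t) ^ n)‖ = ‖w t‖ * (‖c n * x ^ n‖ * ‖t ^ n‖) := by
          simp only [mul_pow, norm_mul]
          ring
      _ ≤ ‖w t‖ * ‖c n * x ^ n‖ := by
          gcongr
          exact mul_le_of_le_one_right (norm_nonneg _) ht1
  · simp_rw [tsum_mul_left]
    exact hw.norm.mul_const _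

theorem euler_integral_repr (a b c x : ℝ) (ha : 0 < a) (hca : a < c)
    (hx0 : 0 ≤ x) (hx1 : x < 1) :
    ∫ t in (0:ℝ)..1, t ^ (a - 1) * (1 - t) ^ (c - a - 1) * (1 - x * t) ^ (-b) =
      (Real.Gamma a * Real.Gamma (c - a) / Real.Gamma c) * F21 a b c x := by
  have hq : 0 < c - a := sub_pos.2 hca
  have hx : |x| < 1 := abs_lt.2 ⟨by linarith, hx1⟩
  have hsum := hasSum_intervalIntegral_mul_tsum (c := fun n ↦ poch b n / n !)
    (intervalIntegrable_rpow_mul_one_sub_rpow ha hq)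
    (summable_abs_poch_div_factorial_mul_pow b hx)
    fun t ht ↦ hasSum_poch_div_factorial_mul_pow b (u := x * t) (by
      rw [abs_mul, abs_of_pos ht.1]
      exact (mul_le_of_le_one_right (abs_nonneg x) ht.2).trans_lt hx)
  have hterm (n : ℕ) : ∫ t in (0 : ℝ)..1, t ^ (a - 1) * (1 - t) ^ (c - a - 1) *
      (poch b n / n ! * (x * t) ^ n) =
      beta a (c - a) * (poch a n * poch b n / (poch c n * n !) * x ^ n) := by
    have := (poch_pos (ha.trans hca) n).ne'
    calc _ = poch b n / n ! * x ^ n *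
          ∫ t in (0 : ℝ)..1, t ^ (a - 1) * (1 - t) ^ (c - a - 1) * t ^ n := by
          rw [← intervalIntegral.integral_const_mul]
          congr 1 with t
          ring
      _ = poch b n / n ! * x ^ n * beta (a + n) (c - a) := by
          rw [integral_rpow_mul_one_sub_rpow_mul_pow ha hq]
      _ = _ := by
          rw [beta_add_nat ha hq, add_sub_cancel]
          field_simp
  simp only [hterm] at hsum
  rw [← hsum.tsum_eq, tsum_mul_left, beta, add_sub_cancel, F21]
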